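/- Let λ = (λ_1,…,λ_s) be an ordered partition of r, and for every pattern P ∈ 𝒫(λ) let m_P be a positive integer. Let H be a collection of pairwise disjoint r-element subsets of ℤ which is interval-wise λ-partite. If for every P ∈ 𝒫(λ) every P-clique in H has size at most m_P, then |H| ≤ ∏_{P ∈ 𝒫(λ)} m_P. -/

import Mathlib

/-- A block `A^k B^k` (if `b = true`) or `B^k A^k` (if `b = false`), where `true` encodes
the letter A and `false` encodes the letter B. -/
def pblock (k : ℕ) (b : Bool) : List Bool :=
  if b then List.replicate k true ++ List.replicate k false
  else List.replicate k false ++ List.replicate k true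

/-- An `r`-pattern: a string in `{A,B}^{2r}` starting with A, with `r` A's and `r` B's.
Here `true` encodes A and `false` encodes B. -/
def IsPattern (r : ℕ) (P : List Bool) : Prop :=
  P.length = 2 * r ∧ P.count true = r ∧ P.head? = some true

/-- The pattern determined by the pair of disjoint finite sets `(e, f)`: list the elements of
`e ∪ f` in increasing order and record membership in `e` (A = `true`) vs `f` (B = `false`). -/
def patternOfPair (e f : Finset ℤ) : List Bool :=
  ((e ∪ f).sort (· ≤ ·)).map (fun x => decide (x ∈ e))

/-- The unordered pair `{e, f}` realizes the pattern `P`. -/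
def Realizes (P : List Bool) (e f : Finset ℤ) : Prop :=
  patternOfPair e f = P ∨ patternOfPair f e = P

/-- A collection `S` is a `P`-clique if every pair of distinct members realizes the pattern `P`. -/
def IsPClique (P : List Bool) (S : Finset (Finset ℤ)) : Prop :=
  ∀ e ∈ S, ∀ f ∈ S, e ≠ f → Realizes P e f

/-- The collectable pattern with block sizes `2·lam 0, 2·lam 1, …` and block orientations
given by `τ` (`true` = `A^k B^k`, `false` = `B^k A^k`). -/
def patternOfParts (lam : List ℕ) (τ : Fin lam.length → Bool) : List Bool :=
  (List.ofFn (fun i => pblock (lam.get i) (τ i))).flatten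

/-- `𝒫(lam)`: the set of collectable patterns whose block partition has block sizes
`2·lam 0, 2·lam 1, …` in order (the first block must start with A). -/
def patternFinset (lam : List ℕ) : Finset (List Bool) :=
  (Finset.univ.filter (fun τ : Fin lam.length → Bool =>
      ∀ h : 0 < lam.length, τ ⟨0, h⟩ = true)).image (patternOfParts lam)

/-- An ordered partition of `r`: a list of positive integers summing to `r`. -/
def IsOrderedPartition (r : ℕ) (lam : List ℕ) : Prop :=
  lam.sum = r ∧ ∀ k ∈ lam, 0 < k

/-- A pattern is collectable if it admits a block partition. -/
def Collectable (r : ℕ) (P : List Bool) : Prop :=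
  ∃ lam : List ℕ, IsOrderedPartition r lam ∧ P ∈ patternFinset lam

/-- `H` is `lam`-partite: there are non-integer reals `x 0 < x 1 < … < x s` such that every
`e ∈ H` has exactly `lam.get i` elements in the interval `(x i, x (i+1))`. -/
def IsLamPartite (lam : List ℕ) (H : Finset (Finset ℤ)) : Prop :=
  ∃ x : Fin (lam.length + 1) → ℝ, StrictMono x ∧ (∀ i, ∀ z : ℤ, (z : ℝ) ≠ x i) ∧
    ∀ e ∈ H, ∀ i : Fin lam.length,
      {z : ℤ | z ∈ e ∧ x i.castSucc < (z : ℝ) ∧ (z : ℝ) < x i.succ}.ncard = lam.get i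

/-- `H` is interval-wise `lam`-partite: `lam`-partite, and moreover for each `i` the convex
hulls of the parts `e ∩ (x i, x (i+1))` are pairwise disjoint over `e ∈ H` (equivalently, for
distinct `e, f ∈ H` all elements of one part precede all elements of the other part). -/
def IsIntervalWisePartite (lam : List ℕ) (H : Finset (Finset ℤ)) : Prop :=
  ∃ x : Fin (lam.length + 1) → ℝ, StrictMono x ∧ (∀ i, ∀ z : ℤ, (z : ℝ) ≠ x i) ∧
    (∀ e ∈ H, ∀ i : Fin lam.length,
      {z : ℤ | z ∈ e ∧ x i.castSucc < (z : ℝ) ∧ (z : ℝ) < x i.succ}.ncard = lam.get i) ∧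
    ∀ i : Fin lam.length, ∀ e ∈ H, ∀ f ∈ H, e ≠ f →
      (∀ a ∈ e, ∀ b ∈ f,
        (x i.castSucc < (a : ℝ) ∧ (a : ℝ) < x i.succ) →
        (x i.castSucc < (b : ℝ) ∧ (b : ℝ) < x i.succ) → a < b) ∨
      (∀ a ∈ e, ∀ b ∈ f,
        (x i.castSucc < (a : ℝ) ∧ (a : ℝ) < x i.succ) →
        (x i.castSucc < (b : ℝ) ∧ (b : ℝ) < x i.succ) → b < a)

/-!
For each block `i`, the interval-wise condition linearly orders the members of `H` by their
`i`-th parts `e ∩ (x i, x (i+1))`, and for `e ≠ f` the pattern of `(e, f)` is the concatenation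
of the blocks `AᵏBᵏ` or `BᵏAᵏ` (`k = λ_i`) dictated by these orders. Fixing an orientation vector
`τ` with `τ 0 = A` therefore gives a strict partial order on `H` whose chains are cliques for the
pattern of `τ`, and any two members of `H` are comparable in one of these orders. As in
Erdős–Szekeres, sending `e` to its vector of chain heights (the largest chain topped by `e`, one
per `τ`) is injective into `∏_P [1, m_P]`.
-/

open Finset

section ChainHeight

variable {α : Type*} (H : Finset α) (R : α → α → Prop)

open Classical in
noncomputable def chainsWithTop (e : α) : Finset (Finset α) :=
  H.powerset.filter fun S => IsChain R (S : Set α) ∧ e ∈ S ∧ ∀ g ∈ S, g ≠ e → R g e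

noncomputable def chainHeightIn (e : α) : ℕ :=
  (chainsWithTop H R e).sup card

variable {H R}

theorem mem_chainsWithTop {e : α} {S : Finset α} :
    S ∈ chainsWithTop H R e ↔ S ⊆ H ∧ IsChain R (S : Set α) ∧ e ∈ S ∧ ∀ g ∈ S, g ≠ e → R g e := by
  classical
  rw [chainsWithTop, mem_filter, mem_powerset]

theorem singleton_mem_chainsWithTop {e : α} (he : e ∈ H) : {e} ∈ chainsWithTop H R e := by
  simp [mem_chainsWithTop, he, IsChain]

theorem one_le_chainHeightIn {e : α} (he : e ∈ H) : 1 ≤ chainHeightIn H R e :=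
  le_sup (f := card) (singleton_mem_chainsWithTop he)

theorem chainHeightIn_le {m : ℕ} (hchain : ∀ S ⊆ H, IsChain R (S : Set α) → S.card ≤ m) (e : α) :
    chainHeightIn H R e ≤ m :=
  Finset.sup_le fun S hS => hchain S (mem_chainsWithTop.1 hS).1 (mem_chainsWithTop.1 hS).2.1

theorem chainHeightIn_lt (hirrefl : ∀ e ∈ H, ¬ R e e)
    (htrans : ∀ e ∈ H, ∀ f ∈ H, ∀ g ∈ H, R e f → R f g → R e g)
    {e f : α} (he : e ∈ H) (hf : f ∈ H) (hef : R e f) :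
    chainHeightIn H R e < chainHeightIn H R f := by
  classical
  obtain ⟨S, hS, hSsup⟩ := exists_mem_eq_sup _ ⟨{e}, singleton_mem_chainsWithTop he⟩ card
  obtain ⟨hSH, hSchain, heS, hStop⟩ := mem_chainsWithTop.1 hS
  have hbelow : ∀ g ∈ S, R g f := fun g hg => by
    by_cases hge : g = e
    · exact hge ▸ hef
    · exact htrans g (hSH hg) e he f hf (hStop g hg hge) hef
  have hfS : f ∉ S := fun hfS => hirrefl f hf (hbelow f hfS)
  have hins : insert f S ∈ chainsWithTop H R f := by
    refine mem_chainsWithTop.2 ⟨insert_subset hf hSH, ?_, mem_insert_self f S, ?_⟩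
    · rw [coe_insert]
      exact hSchain.insert fun g hg _ => Or.inr (hbelow g hg)
    · intro g hg hgf
      exact hbelow g ((mem_insert.1 hg).resolve_left hgf)
  calc chainHeightIn H R e = S.card := hSsup
    _ < (insert f S).card := by rw [card_insert_of_notMem hfS]; exact Nat.lt_succ_self _
    _ ≤ chainHeightIn H R f := le_sup (f := card) hins

end ChainHeight

theorem card_le_prod_of_isChain_card_le {α ι : Type*} [DecidableEq ι]
    {H : Finset α} {T : Finset ι} {R : ι → α → α → Prop} {m : ι → ℕ}
    (hirrefl : ∀ τ ∈ T, ∀ e ∈ H, ¬ R τ e e)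
    (htrans : ∀ τ ∈ T, ∀ e ∈ H, ∀ f ∈ H, ∀ g ∈ H, R τ e f → R τ f g → R τ e g)
    (hcover : ∀ e ∈ H, ∀ f ∈ H, e ≠ f → ∃ τ ∈ T, R τ e f ∨ R τ f e)
    (hchain : ∀ τ ∈ T, ∀ S ⊆ H, IsChain (R τ) (S : Set α) → S.card ≤ m τ) :
    H.card ≤ ∏ τ ∈ T, m τ := by
  calc H.card ≤ (T.pi fun τ => Icc 1 (m τ)).card := by
        refine card_le_card_of_injOn (fun e τ _ => chainHeightIn H (R τ) e) (fun e he => ?_) ?_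
        · refine mem_pi.2 fun τ hτ => mem_Icc.2 ?_
          exact ⟨one_le_chainHeightIn he, chainHeightIn_le (hchain τ hτ) e⟩
        · intro e he f hf heq
          by_contra hef
          obtain ⟨τ, hτ, hR⟩ := hcover e he f hf hef
          have hτeq := congrFun (congrFun heq τ) hτ
          rcases hR with hR | hR
          · exact (chainHeightIn_lt (hirrefl τ hτ) (htrans τ hτ) he hf hR).ne hτeq
          · exact (chainHeightIn_lt (hirrefl τ hτ) (htrans τ hτ) hf he hR).ne' hτeq
    _ = ∏ τ ∈ T, m τ := by simp [card_pi]

section Sorting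

variable {α : Type*} [LinearOrder α]

def Precedes (A B : Finset α) : Prop := ∀ a ∈ A, ∀ b ∈ B, a < b

theorem not_precedes_self {A : Finset α} (hA : A.Nonempty) : ¬ Precedes A A :=
  fun h => lt_irrefl _ (h _ hA.choose_spec _ hA.choose_spec)

theorem Precedes.trans {A B C : Finset α} (hAB : Precedes A B) (hBC : Precedes B C)
    (hB : B.Nonempty) : Precedes A C :=
  fun a ha c hc => (hAB a ha _ hB.choose_spec).trans (hBC _ hB.choose_spec c hc)

theorem Finset.sort_eq_of_pairwise_lt {s : Finset α} {l : List α} (hl : l.Pairwise (· < ·))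
    (hmem : ∀ a, a ∈ l ↔ a ∈ s) : s.sort (· ≤ ·) = l :=
  (sortedLT_sort s).pairwise.eq_of_mem_iff hl fun a => by rw [mem_sort, hmem]

theorem Finset.sort_union_of_precedes {A B : Finset α} (h : Precedes A B) :
    (A ∪ B).sort (· ≤ ·) = A.sort (· ≤ ·) ++ B.sort (· ≤ ·) := by
  refine sort_eq_of_pairwise_lt (List.pairwise_append.2 ⟨(sortedLT_sort A).pairwise,
    (sortedLT_sort B).pairwise, fun a ha b hb => h a ?_ b ?_⟩) (by simp)
  exacts [(mem_sort _).1 ha, (mem_sort _).1 hb]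

theorem Finset.sort_biUnion_of_precedes {n : ℕ} (C : Fin n → Finset α)
    (h : ∀ i j, i < j → Precedes (C i) (C j)) :
    (univ.biUnion C).sort (· ≤ ·) = (List.ofFn fun i => (C i).sort (· ≤ ·)).flatten := by
  refine sort_eq_of_pairwise_lt (List.pairwise_flatten.2 ⟨?_, List.pairwise_ofFn.2 ?_⟩) ?_
  · simp only [List.mem_ofFn, forall_exists_index]
    rintro _ i rfl
    exact (sortedLT_sort _).pairwise
  · intro i j hij a ha b hb
    exact h i j hij a (by simpa using ha) b (by simpa using hb)
  · simp [List.mem_flatten]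

theorem Finset.map_sort_eq_replicate {A : Finset α} {p : α → Bool} {b : Bool}
    (h : ∀ a ∈ A, p a = b) : (A.sort (· ≤ ·)).map p = List.replicate A.card b :=
  List.eq_replicate_iff.2 ⟨by simp, by simpa using h⟩

end Sorting

theorem pblock_length (k : ℕ) (b : Bool) : (pblock k b).length = 2 * k := by
  cases b <;> simp [pblock, two_mul]

theorem pblock_injective {k : ℕ} (hk : 0 < k) : Function.Injective (pblock k) := by
  intro b₁ b₂ h
  obtain ⟨k, rfl⟩ := Nat.exists_eq_add_one_of_ne_zero hk.ne'
  cases b₁ <;> cases b₂ <;> simp_all [pblock, List.replicate_succ]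

theorem map_sort_union_eq_pblock {α : Type*} [LinearOrder α] {A B e : Finset α} {k : ℕ}
    {b : Bool} (hA : A ⊆ e) (hB : Disjoint B e) (hAk : A.card = k) (hBk : B.card = k)
    (h : if b then Precedes A B else Precedes B A) :
    ((A ∪ B).sort (· ≤ ·)).map (fun z => decide (z ∈ e)) = pblock k b := by
  have hmapA : (A.sort (· ≤ ·)).map (fun z => decide (z ∈ e)) = List.replicate k true := by
    rw [← hAk]
    exact map_sort_eq_replicate fun a ha => decide_eq_true (hA ha)
  have hmapB : (B.sort (· ≤ ·)).map (fun z => decide (z ∈ e)) = List.replicate k false := by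
    rw [← hBk]
    exact map_sort_eq_replicate fun a ha => decide_eq_false (disjoint_left.1 hB ha)
  cases b
  · rw [union_comm, sort_union_of_precedes h, List.map_append, hmapA, hmapB, pblock]; rfl
  · rw [sort_union_of_precedes h, List.map_append, hmapA, hmapB, pblock]; rfl

theorem patternOfParts_cons (k : ℕ) (lam : List ℕ) (τ : Fin (k :: lam).length → Bool) :
    patternOfParts (k :: lam) τ = pblock k (τ 0) ++ patternOfParts lam (fun i => τ i.succ) := by
  simp [patternOfParts, List.ofFn_succ]

theorem patternOfParts_injective : ∀ {lam : List ℕ}, (∀ k ∈ lam, 0 < k) →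
    Function.Injective (patternOfParts lam)
  | [], _ => fun _ _ _ => funext fun i => i.elim0
  | k :: lam, hpos => fun τ₁ τ₂ h => by
    rw [patternOfParts_cons, patternOfParts_cons] at h
    obtain ⟨hhead, htail⟩ := List.append_inj h (by rw [pblock_length, pblock_length])
    have h0 := pblock_injective (hpos k List.mem_cons_self) hhead
    have hsucc := patternOfParts_injective (fun k' hk' => hpos k' (List.mem_cons_of_mem k hk'))
      htail
    funext i
    exact Fin.cases h0 (fun j => congrFun hsucc j) i

section IntervalParts

variable {n : ℕ} (x : Fin (n + 1) → ℝ)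

noncomputable def intervalPart (i : Fin n) (e : Finset ℤ) : Finset ℤ :=
  e.filter fun z => x i.castSucc < z ∧ (z : ℝ) < x i.succ

def PartsOrdered (τ : Fin n → Bool) (e f : Finset ℤ) : Prop :=
  ∀ i, if τ i then Precedes (intervalPart x i e) (intervalPart x i f)
    else Precedes (intervalPart x i f) (intervalPart x i e)

variable {x}

theorem coe_intervalPart (i : Fin n) (e : Finset ℤ) :
    (intervalPart x i e : Set ℤ) =
      {z : ℤ | z ∈ e ∧ x i.castSucc < (z : ℝ) ∧ (z : ℝ) < x i.succ} := by
  ext z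
  simp [intervalPart]

theorem intervalPart_subset (i : Fin n) (e : Finset ℤ) : intervalPart x i e ⊆ e :=
  filter_subset _ _

theorem intervalPart_union (i : Fin n) (e f : Finset ℤ) :
    intervalPart x i (e ∪ f) = intervalPart x i e ∪ intervalPart x i f :=
  filter_union _ _ _

theorem precedes_intervalPart (hx : Monotone x) {i j : Fin n} (hij : i < j) (e f : Finset ℤ) :
    Precedes (intervalPart x i e) (intervalPart x j f) := by
  intro a ha b hb
  simp only [intervalPart, mem_filter] at ha hb
  have hx_ij : x i.succ ≤ x j.castSucc := hx (Fin.succ_le_castSucc_iff.2 hij)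
  exact_mod_cast ha.2.2.trans (hx_ij.trans_lt hb.2.1)

theorem biUnion_intervalPart (hx : Monotone x) {e : Finset ℤ}
    (h : ∑ i, (intervalPart x i e).card = e.card) :
    univ.biUnion (fun i => intervalPart x i e) = e := by
  refine eq_of_subset_of_card_le (biUnion_subset.2 fun i _ => intervalPart_subset i e) ?_
  rw [card_biUnion, h]
  intro i _ j _ hij
  rcases hij.lt_or_gt with hlt | hlt
  · exact disjoint_left.2 fun a ha ha' => lt_irrefl a (precedes_intervalPart hx hlt e e a ha a ha')
  · exact disjoint_left.2 fun a ha ha' => lt_irrefl a (precedes_intervalPart hx hlt e e a ha' a ha)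

end IntervalParts

theorem patternOfPair_eq_patternOfParts {lam : List ℕ} {x : Fin (lam.length + 1) → ℝ}
    (hx : Monotone x) {τ : Fin lam.length → Bool} {e f : Finset ℤ}
    (he : univ.biUnion (fun i => intervalPart x i e) = e)
    (hf : univ.biUnion (fun i => intervalPart x i f) = f)
    (he_card : ∀ i, (intervalPart x i e).card = lam.get i)
    (hf_card : ∀ i, (intervalPart x i f).card = lam.get i)
    (hef : Disjoint e f) (h : PartsOrdered x τ e f) :
    patternOfPair e f = patternOfParts lam τ := by
  have hcover : univ.biUnion (fun i => intervalPart x i (e ∪ f)) = e ∪ f := by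
    simp only [intervalPart_union, biUnion_union, he, hf]
  have hsort : (e ∪ f).sort (· ≤ ·) =
      (List.ofFn fun i => (intervalPart x i (e ∪ f)).sort (· ≤ ·)).flatten := by
    conv_lhs => rw [← hcover]
    exact sort_biUnion_of_precedes _ fun i j hij => precedes_intervalPart hx hij _ _
  rw [patternOfPair, hsort, List.map_flatten, List.map_ofFn, patternOfParts]
  congr 2
  funext i
  rw [Function.comp_apply, intervalPart_union]
  exact map_sort_union_eq_pblock (intervalPart_subset i e)
    (hef.symm.mono_left (intervalPart_subset i f)) (he_card i) (hf_card i) (h i)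

section PartsOrdered

variable {n : ℕ} {x : Fin (n + 1) → ℝ} {τ : Fin n → Bool}

theorem PartsOrdered.trans {e f g : Finset ℤ} (hef : PartsOrdered x τ e f)
    (hfg : PartsOrdered x τ f g) (hf : ∀ i, (intervalPart x i f).Nonempty) :
    PartsOrdered x τ e g := by
  intro i
  have hefi := hef i
  have hfgi := hfg i
  split_ifs at hefi hfgi ⊢
  · exact hefi.trans hfgi (hf i)
  · exact hfgi.trans hefi (hf i)

theorem not_partsOrdered_self {i : Fin n} (hi : τ i = true) {e : Finset ℤ}
    (he : (intervalPart x i e).Nonempty) : ¬ PartsOrdered x τ e e := fun h => by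
  have hi' := h i
  rw [if_pos hi] at hi'
  exact not_precedes_self he hi'

theorem exists_partsOrdered {e f : Finset ℤ}
    (hsep : ∀ i, Precedes (intervalPart x i e) (intervalPart x i f) ∨
      Precedes (intervalPart x i f) (intervalPart x i e))
    {i₀ : Fin n} (h₀ : Precedes (intervalPart x i₀ e) (intervalPart x i₀ f)) :
    ∃ τ : Fin n → Bool, τ i₀ = true ∧ PartsOrdered x τ e f := by
  classical
  refine ⟨fun i => decide (Precedes (intervalPart x i e) (intervalPart x i f)),
    decide_eq_true h₀, fun i => ?_⟩
  by_cases hi : Precedes (intervalPart x i e) (intervalPart x i f)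
  · simp [hi]
  · simpa [hi] using (hsep i).resolve_left hi

theorem exists_partsOrdered_or {e f : Finset ℤ}
    (hsep : ∀ i, Precedes (intervalPart x i e) (intervalPart x i f) ∨
      Precedes (intervalPart x i f) (intervalPart x i e)) (i₀ : Fin n) :
    ∃ τ : Fin n → Bool, τ i₀ = true ∧ (PartsOrdered x τ e f ∨ PartsOrdered x τ f e) := by
  rcases hsep i₀ with h | h
  · obtain ⟨τ, hτ, hef⟩ := exists_partsOrdered hsep h
    exact ⟨τ, hτ, .inl hef⟩
  · obtain ⟨τ, hτ, hfe⟩ := exists_partsOrdered (fun i => (hsep i).symm) h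
    exact ⟨τ, hτ, .inr hfe⟩

end PartsOrdered

theorem IsIntervalWisePartite.exists_intervalParts {lam : List ℕ} {H : Finset (Finset ℤ)}
    (hpart : IsIntervalWisePartite lam H) :
    ∃ x : Fin (lam.length + 1) → ℝ, Monotone x ∧
      (∀ e ∈ H, ∀ i, (intervalPart x i e).card = lam.get i) ∧
      ∀ i, ∀ e ∈ H, ∀ f ∈ H, e ≠ f → Precedes (intervalPart x i e) (intervalPart x i f) ∨
        Precedes (intervalPart x i f) (intervalPart x i e) := by
  obtain ⟨x, hx, -, hcard, hsep⟩ := hpart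
  refine ⟨x, hx.monotone, fun e he i => ?_, fun i e he f hf hef => ?_⟩
  · rw [← hcard e he i, ← coe_intervalPart, Set.ncard_coe_finset]
  · simp only [Precedes, intervalPart, mem_filter]
    rcases hsep i e he f hf hef with h | h
    · exact .inl fun a ha b hb => h a ha.1 b hb.1 ha.2 hb.2
    · exact .inr fun a ha b hb => h b hb.1 a ha.1 hb.2 ha.2

theorem isPClique_of_isChain_partsOrdered {lam : List ℕ} {x : Fin (lam.length + 1) → ℝ}
    (hx : Monotone x) {H : Finset (Finset ℤ)}
    (hcover : ∀ e ∈ H, univ.biUnion (fun i => intervalPart x i e) = e)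
    (hcard : ∀ e ∈ H, ∀ i, (intervalPart x i e).card = lam.get i)
    (hdisj : ∀ e ∈ H, ∀ f ∈ H, e ≠ f → Disjoint e f)
    {τ : Fin lam.length → Bool} {S : Finset (Finset ℤ)} (hSH : S ⊆ H)
    (hS : IsChain (PartsOrdered x τ) (S : Set (Finset ℤ))) :
    IsPClique (patternOfParts lam τ) S := by
  intro e he f hf hef
  have hpattern : ∀ {e f}, e ∈ S → f ∈ S → e ≠ f → PartsOrdered x τ e f →
      patternOfPair e f = patternOfParts lam τ := fun he hf hef h =>
    patternOfPair_eq_patternOfParts hx (hcover _ (hSH he)) (hcover _ (hSH hf))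
      (hcard _ (hSH he)) (hcard _ (hSH hf)) (hdisj _ (hSH he) _ (hSH hf) hef) h
  rcases hS he hf hef with h | h
  · exact .inl (hpattern he hf hef h)
  · exact .inr (hpattern hf he hef.symm h)

theorem interval_wise_partite_bound_general (r : ℕ) (hr : 0 < r) (lam : List ℕ)
    (hlam : IsOrderedPartition r lam)
    (m : List Bool → ℕ)
    (H : Finset (Finset ℤ))
    (hcard : ∀ e ∈ H, e.card = r)
    (hdisj : ∀ e ∈ H, ∀ f ∈ H, e ≠ f → Disjoint e f)
    (hpart : IsIntervalWisePartite lam H)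
    (hclique : ∀ P ∈ patternFinset lam, ∀ S ⊆ H, IsPClique P S → S.card ≤ m P) :
    H.card ≤ ∏ P ∈ patternFinset lam, m P := by
  obtain ⟨hsum, hpos⟩ := hlam
  obtain ⟨x, hx, hpartCard, hsep⟩ := hpart.exists_intervalParts
  have hlen : 0 < lam.length := List.length_pos_iff.2 (by rintro rfl; simp at hsum; omega)
  have hcover : ∀ e ∈ H, univ.biUnion (fun i => intervalPart x i e) = e := fun e he =>
    biUnion_intervalPart hx (by simp [hpartCard e he, hcard e he, ← hsum, ← List.sum_ofFn])
  have hnonempty : ∀ e ∈ H, ∀ i, (intervalPart x i e).Nonempty := fun e he i => by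
    rw [← card_pos, hpartCard e he i]
    exact hpos _ (List.get_mem lam i)
  set T := univ.filter fun τ : Fin lam.length → Bool => ∀ h : 0 < lam.length, τ ⟨0, h⟩ = true
  calc H.card ≤ ∏ τ ∈ T, m (patternOfParts lam τ) := by
        refine card_le_prod_of_isChain_card_le (R := PartsOrdered x) ?_ ?_ ?_ ?_
        · exact fun τ hτ e he =>
            not_partsOrdered_self ((mem_filter.1 hτ).2 hlen) (hnonempty e he ⟨0, hlen⟩)
        · exact fun τ _ e _ f hf g _ hef hfg => hef.trans hfg (hnonempty f hf)
        · intro e he f hf hef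
          obtain ⟨τ, hτ, hR⟩ := exists_partsOrdered_or (hsep · e he f hf hef) ⟨0, hlen⟩
          exact ⟨τ, mem_filter.2 ⟨mem_univ τ, fun _ => hτ⟩, hR⟩
        · exact fun τ hτ S hSH hS => hclique _ (mem_image_of_mem _ hτ) S hSH
            (isPClique_of_isChain_partsOrdered hx hcover hpartCard hdisj hSH hS)
    _ = ∏ P ∈ patternFinset lam, m P :=
        (prod_image fun _ _ _ _ h => patternOfParts_injective hpos h).symm

/-- If `H` is interval-wise `lam`-partite and for each `P ∈ 𝒫(lam)` every `P`-clique in `H`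
has size at most `m P`, then `|H| ≤ ∏_{P ∈ 𝒫(lam)} m P`. -/
theorem interval_wise_partite_bound (r : ℕ) (hr : 0 < r) (lam : List ℕ)
    (hlam : IsOrderedPartition r lam)
    (m : List Bool → ℕ) (hm : ∀ P ∈ patternFinset lam, 0 < m P)
    (H : Finset (Finset ℤ))
    (hcard : ∀ e ∈ H, e.card = r)
    (hdisj : ∀ e ∈ H, ∀ f ∈ H, e ≠ f → Disjoint e f)
    (hpart : IsIntervalWisePartite lam H)
    (hclique : ∀ P ∈ patternFinset lam, ∀ S ⊆ H, IsPClique P S → S.card ≤ m P) :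
    H.card ≤ ∏ P ∈ patternFinset lam, m P :=
  interval_wise_partite_bound_general r hr lam hlam m H hcard hdisj hpart hclique
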